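/- arXiv:1812.10229 — 5 statements merged into one kernel-verified Lean document; each statement's English description precedes it below -/
import Mathlib

section
/- Let f(x;z) = f(x) + (p/2)‖x - z‖², assumed strongly convex in x with modulus p+γ > 0 on a compact convex set C. Define x*(z) = argmin_{x ∈ C} f(x;z). Then for all z, z', ‖x*(z) - x*(z')‖ ≤ (p/(p+γ))‖z - z'‖, i.e., the proximal-type argmin map is Lipschitz in the center z with constant p/(p+γ). -/
/-!
Minimizing an `m`-strongly convex function gives quadratic growth around the minimizer. Adding the
growth inequalities at `x*(z)` for centre `z` and at `x*(z')` for centre `z'`, the `f`-terms cancel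
and the quadratic penalties leave `(p + γ) ‖x*(z) - x*(z')‖² ≤ p ⟪x*(z) - x*(z'), z - z'⟫`;
Cauchy–Schwarz then gives the Lipschitz bound.
-/

open Filter Topology RealInnerProductSpace

lemma StrongConvexOn.add_mul_sq_norm_sub_le_of_isMinOn {E : Type*} [NormedAddCommGroup E]
    [NormedSpace ℝ E] {C : Set E} {m : ℝ} {g : E → ℝ} {u y : E}
    (hg : StrongConvexOn C m g) (hu : u ∈ C) (hmin : IsMinOn g C u) (hy : y ∈ C) :
    g u + m / 2 * ‖y - u‖ ^ 2 ≤ g y := by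
  have h_segment : ∀ t ∈ Set.Ioo (0 : ℝ) 1, g u + (1 - t) * (m / 2 * ‖y - u‖ ^ 2) ≤ g y := by
    rintro t ⟨ht₀, ht₁⟩
    have hconv := hg.2 hy hu ht₀.le (sub_nonneg.2 ht₁.le) (add_sub_cancel t 1)
    have hle : g u ≤ g (t • y + (1 - t) • u) :=
      hmin (hg.1 hy hu ht₀.le (sub_nonneg.2 ht₁.le) (add_sub_cancel t 1))
    simp only [smul_eq_mul] at hconv
    refine le_of_mul_le_mul_left ?_ ht₀
    linear_combination hle + hconv
  have h_lim : Tendsto (fun t : ℝ => g u + (1 - t) * (m / 2 * ‖y - u‖ ^ 2)) (𝓝[>] 0)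
      (𝓝 (g u + m / 2 * ‖y - u‖ ^ 2)) := by
    have : Continuous fun t : ℝ => g u + (1 - t) * (m / 2 * ‖y - u‖ ^ 2) := by fun_prop
    simpa using (this.tendsto 0).mono_left nhdsWithin_le_nhds
  exact le_of_tendsto h_lim <|
    eventually_of_mem (Ioo_mem_nhdsGT (by norm_num : (0 : ℝ) < 1)) h_segment

section ProximalArgmin

variable {E : Type*} [NormedAddCommGroup E] [InnerProductSpace ℝ E]
  {g : E → ℝ} {C : Set E} {p m : ℝ} {z z' u v : E}

lemma mul_sq_norm_sub_le_inner_of_isMinOn_add_sq_norm_sub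
    (hgz : StrongConvexOn C m (fun x => g x + p / 2 * ‖x - z‖ ^ 2))
    (hgz' : StrongConvexOn C m (fun x => g x + p / 2 * ‖x - z'‖ ^ 2))
    (hu : u ∈ C) (hu_min : IsMinOn (fun x => g x + p / 2 * ‖x - z‖ ^ 2) C u)
    (hv : v ∈ C) (hv_min : IsMinOn (fun x => g x + p / 2 * ‖x - z'‖ ^ 2) C v) :
    m * ‖u - v‖ ^ 2 ≤ p * ⟪u - v, z - z'⟫ := by
  have hu_growth := hgz.add_mul_sq_norm_sub_le_of_isMinOn hu hu_min hv
  have hv_growth := hgz'.add_mul_sq_norm_sub_le_of_isMinOn hv hv_min hu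
  have h_penalties : ‖v - z‖ ^ 2 - ‖u - z‖ ^ 2 + ‖u - z'‖ ^ 2 - ‖v - z'‖ ^ 2
      = 2 * ⟪u - v, z - z'⟫ := by
    simp only [norm_sub_sq_real, inner_sub_left, inner_sub_right]
    ring
  rw [norm_sub_rev v u] at hu_growth
  linear_combination hu_growth + hv_growth + p / 2 * h_penalties

lemma norm_sub_le_of_isMinOn_add_sq_norm_sub (hp : 0 ≤ p) (hm : 0 < m)
    (hgz : StrongConvexOn C m (fun x => g x + p / 2 * ‖x - z‖ ^ 2))
    (hgz' : StrongConvexOn C m (fun x => g x + p / 2 * ‖x - z'‖ ^ 2))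
    (hu : u ∈ C) (hu_min : IsMinOn (fun x => g x + p / 2 * ‖x - z‖ ^ 2) C u)
    (hv : v ∈ C) (hv_min : IsMinOn (fun x => g x + p / 2 * ‖x - z'‖ ^ 2) C v) :
    ‖u - v‖ ≤ p / m * ‖z - z'‖ := by
  have h_sq : m * ‖u - v‖ ^ 2 ≤ p * ‖z - z'‖ * ‖u - v‖ :=
    calc m * ‖u - v‖ ^ 2 ≤ p * ⟪u - v, z - z'⟫ :=
          mul_sq_norm_sub_le_inner_of_isMinOn_add_sq_norm_sub hgz hgz' hu hu_min hv hv_min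
      _ ≤ p * (‖u - v‖ * ‖z - z'‖) := mul_le_mul_of_nonneg_left (real_inner_le_norm _ _) hp
      _ = p * ‖z - z'‖ * ‖u - v‖ := by ring
  rw [div_mul_eq_mul_div, le_div_iff₀ hm]
  rcases (norm_nonneg (u - v)).eq_or_lt with h0 | hpos
  · rw [← h0, zero_mul]
    positivity
  · nlinarith

end ProximalArgmin

theorem stmt1_general {n : ℕ} (f : EuclideanSpace ℝ (Fin n) → ℝ)
    (C : Set (EuclideanSpace ℝ (Fin n))) (p γ : ℝ)
    (xstar : EuclideanSpace ℝ (Fin n) → EuclideanSpace ℝ (Fin n))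
    (hp : 0 < p) (hpγ : 0 < p + γ)
    (hsc : ∀ z, StrongConvexOn C (p + γ) (fun x => f x + p / 2 * ‖x - z‖ ^ 2))
    (hxs : ∀ z, xstar z ∈ C ∧ IsMinOn (fun x => f x + p / 2 * ‖x - z‖ ^ 2) C (xstar z)) :
    ∀ z z', ‖xstar z - xstar z'‖ ≤ p / (p + γ) * ‖z - z'‖ := fun z z' =>
  norm_sub_le_of_isMinOn_add_sq_norm_sub hp.le hpγ (hsc z) (hsc z')
    (hxs z).1 (hxs z).2 (hxs z').1 (hxs z').2

/-- Lipschitz continuity of the proximal-type argmin map `z ↦ x*(z)` with constant `p/(p+γ)`. -/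
theorem stmt1 {n : ℕ} (f : EuclideanSpace ℝ (Fin n) → ℝ)
    (C : Set (EuclideanSpace ℝ (Fin n))) (p γ : ℝ)
    (xstar : EuclideanSpace ℝ (Fin n) → EuclideanSpace ℝ (Fin n))
    (hf : Differentiable ℝ f)
    (hCne : C.Nonempty) (hCcpt : IsCompact C) (hCcvx : Convex ℝ C)
    (hp : 0 < p) (hpγ : 0 < p + γ)
    (hsc : ∀ z, StrongConvexOn C (p + γ) (fun x => f x + p / 2 * ‖x - z‖ ^ 2))
    (hxs : ∀ z, xstar z ∈ C ∧ IsMinOn (fun x => f x + p / 2 * ‖x - z‖ ^ 2) C (xstar z)) :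
    ∀ z z', ‖xstar z - xstar z'‖ ≤ p / (p + γ) * ‖z - z'‖ :=
  stmt1_general f C p γ xstar hp hpγ hsc hxs
end

section
/- With M(z) = min_{x∈C, Ax=b} (f(x) + (p/2)‖x-z‖²), x*(z) its minimizer, and assuming z ↦ x*(z) is Lipschitz with constant p/(p+γ), M satisfies the descent estimate M(z') - M(z) ≤ p⟨z' - z, z - x*(z)⟩ + (p L̃/2)‖z - z'‖² for all z, z', where L̃ = p/(p+γ) + 1. Equivalently, ∇M is Lipschitz with constant p·L̃. -/
/-!
Since `x*` is `p/(p+γ)`-Lipschitz, the gradient `p • (id - x*)` of `M` is Lipschitz with constant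
`L = p (p/(p+γ) + 1)`. The descent inequality is then the classical descent lemma: along
`t ↦ z + t • (z' - z)` the function `M(z + t v) - t ⟪∇M z, v⟫ - (L/2) t² ‖v‖²` has nonpositive
derivative on `[0, 1]`, by Cauchy–Schwarz and the Lipschitz bound.
-/

open InnerProductSpace RealInnerProductSpace

theorem norm_smul_sub_sub_smul_sub_sub_le {E : Type*} [NormedAddCommGroup E] [NormedSpace ℝ E]
    {T : E → E} {K p : ℝ} (hp : 0 ≤ p) (hT : ∀ z z', ‖T z - T z'‖ ≤ K * ‖z - z'‖) (z z' : E) :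
    ‖p • (z - T z) - p • (z' - T z')‖ ≤ p * (K + 1) * ‖z - z'‖ := by
  have h_id_sub : ‖(z - T z) - (z' - T z')‖ ≤ (K + 1) * ‖z - z'‖ :=
    calc ‖(z - T z) - (z' - T z')‖ = ‖(z - z') + (T z' - T z)‖ := by congr 1; abel
      _ ≤ ‖z - z'‖ + ‖T z' - T z‖ := norm_add_le _ _
      _ ≤ ‖z - z'‖ + K * ‖z - z'‖ := by grw [hT z' z, norm_sub_rev z']
      _ = (K + 1) * ‖z - z'‖ := by ring
  rw [← smul_sub, norm_smul, Real.norm_of_nonneg hp, mul_assoc]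
  exact mul_le_mul_of_nonneg_left h_id_sub hp

section Descent

variable {E : Type*} [NormedAddCommGroup E] [InnerProductSpace ℝ E] [CompleteSpace E]

theorem HasGradientAt.hasDerivAt_add_smul {f : E → ℝ} {g x v : E} {t : ℝ}
    (hf : HasGradientAt f g (x + t • v)) :
    HasDerivAt (fun s : ℝ => f (x + s • v)) ⟪g, v⟫ t := by
  have hline : HasDerivAt (fun s : ℝ => x + s • v) v t := by
    simpa using ((hasDerivAt_id t).smul_const v).const_add x
  simpa only [toDual_apply_apply, Function.comp_def] using
    hf.hasFDerivAt.comp_hasDerivAt t hline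

theorem sub_le_inner_gradient_add_of_lipschitz {f : E → ℝ} {g : E → E} {L : ℝ}
    (hf : ∀ x, HasGradientAt f (g x) x) (hg : ∀ x y, ‖g x - g y‖ ≤ L * ‖x - y‖) (x y : E) :
    f y - f x ≤ ⟪g x, y - x⟫ + L / 2 * ‖y - x‖ ^ 2 := by
  set v := y - x
  let φ : ℝ → ℝ := fun t => f (x + t • v) - t * ⟪g x, v⟫ - L / 2 * t ^ 2 * ‖v‖ ^ 2
  have hφ : ∀ t, HasDerivAt φ (⟪g (x + t • v), v⟫ - ⟪g x, v⟫ - L * t * ‖v‖ ^ 2) t := by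
    intro t
    have hquad : HasDerivAt (fun s : ℝ => L / 2 * s ^ 2 * ‖v‖ ^ 2) (L * t * ‖v‖ ^ 2) t := by
      refine (((hasDerivAt_pow 2 t).const_mul (L / 2)).mul_const (‖v‖ ^ 2)).congr_deriv ?_
      push_cast
      ring
    exact (((hf _).hasDerivAt_add_smul).sub ((hasDerivAt_id t).mul_const _)).sub hquad
      |>.congr_deriv (by simp)
  have hφ'_nonpos : ∀ t ∈ interior (Set.Icc (0 : ℝ) 1),
      ⟪g (x + t • v), v⟫ - ⟪g x, v⟫ - L * t * ‖v‖ ^ 2 ≤ 0 := by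
    intro t ht
    rw [interior_Icc] at ht
    have hstep : ‖g (x + t • v) - g x‖ ≤ L * (t * ‖v‖) := by
      simpa [norm_smul, abs_of_pos ht.1] using hg (x + t • v) x
    calc ⟪g (x + t • v), v⟫ - ⟪g x, v⟫ - L * t * ‖v‖ ^ 2
        = ⟪g (x + t • v) - g x, v⟫ - L * t * ‖v‖ ^ 2 := by rw [inner_sub_left]
      _ ≤ ‖g (x + t • v) - g x‖ * ‖v‖ - L * t * ‖v‖ ^ 2 := by
          grw [real_inner_le_norm]
      _ ≤ L * (t * ‖v‖) * ‖v‖ - L * t * ‖v‖ ^ 2 := by grw [hstep]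
      _ = 0 := by ring
  have hanti : AntitoneOn φ (Set.Icc 0 1) :=
    antitoneOn_of_hasDerivWithinAt_nonpos (convex_Icc 0 1)
      (fun t _ => (hφ t).continuousAt.continuousWithinAt)
      (fun t _ => (hφ t).hasDerivWithinAt) hφ'_nonpos
  have hφ_one_le_zero : φ 1 ≤ φ 0 := hanti (by norm_num) (by norm_num) zero_le_one
  simp only [φ, v, one_smul, zero_smul, add_zero, add_sub_cancel] at hφ_one_le_zero
  linarith

end Descent

theorem stmt8_general {n : ℕ} (M : EuclideanSpace ℝ (Fin n) → ℝ)
    (xstar : EuclideanSpace ℝ (Fin n) → EuclideanSpace ℝ (Fin n)) (p γ : ℝ)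
    (hp : 0 < p)
    (hgrad : ∀ z, HasGradientAt M (p • (z - xstar z)) z)
    (hLip : ∀ z z', ‖xstar z - xstar z'‖ ≤ p / (p + γ) * ‖z - z'‖) :
    (∀ z z', M z' - M z ≤ p * (inner ℝ (z' - z) (z - xstar z) : ℝ)
        + p * (p / (p + γ) + 1) / 2 * ‖z - z'‖ ^ 2) ∧
    (∀ z z', ‖p • (z - xstar z) - p • (z' - xstar z')‖
        ≤ p * (p / (p + γ) + 1) * ‖z - z'‖) := by
  have hgradLip := norm_smul_sub_sub_smul_sub_sub_le hp.le hLip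
  refine ⟨fun z z' => ?_, hgradLip⟩
  have hdescent := sub_le_inner_gradient_add_of_lipschitz hgrad hgradLip z z'
  rwa [real_inner_smul_left, real_inner_comm, norm_sub_rev z'] at hdescent

/-- Proximal descent: `M(z') - M(z) ≤ p⟨z' - z, z - x*(z)⟩ + (p L̃/2)‖z - z'‖²` with
`L̃ = p/(p+γ) + 1`; equivalently `∇M` is Lipschitz with constant `p·L̃`. -/
theorem stmt8 {n : ℕ} (M : EuclideanSpace ℝ (Fin n) → ℝ)
    (xstar : EuclideanSpace ℝ (Fin n) → EuclideanSpace ℝ (Fin n)) (p γ : ℝ)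
    (hp : 0 < p) (hpγ : 0 < p + γ)
    (hgrad : ∀ z, HasGradientAt M (p • (z - xstar z)) z)
    (hLip : ∀ z z', ‖xstar z - xstar z'‖ ≤ p / (p + γ) * ‖z - z'‖) :
    (∀ z z', M z' - M z ≤ p * (inner ℝ (z' - z) (z - xstar z) : ℝ)
        + p * (p / (p + γ) + 1) / 2 * ‖z - z'‖ ^ 2) ∧
    (∀ z z', ‖p • (z - xstar z) - p • (z' - xstar z')‖
        ≤ p * (p / (p + γ) + 1) * ‖z - z'‖) :=
  stmt8_general M xstar p γ hp hgrad hLip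
end

section
/- (Hoffman bound) Let A ∈ ℝ^{m×n}, C ∈ ℝ^{k×n}, b ∈ ℝᵐ, d ∈ ℝᵏ, and suppose S = {x : Ax ≤ b, Cx = d} is nonempty. Then there exists a constant θ > 0 depending only on A and C such that for every x̄ ∈ ℝⁿ, dist(x̄, S)² ≤ θ²(‖(Ax̄ - b)₊‖² + ‖Cx̄ - d‖²), where (·)₊ denotes componentwise positive part. -/
/-!
Let `p` be the point of `S` nearest to `x̄`. By the variational inequality at `p` and Farkas'
lemma, `x̄ - p` lies in the cone spanned by the constraint normals `aᵢ` active at `p`; by the conic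
Carathéodory theorem it is `∑ μᵢ aᵢ` with `μ ≥ 0` supported on a linearly independent set of
active normals. Since there are finitely many such sets, `‖μ‖ ≤ θ ‖x̄ - p‖` with `θ` depending only
on the normals, and then, with `r = (Ax̄ - b)₊`,
`‖x̄ - p‖² = ∑ μᵢ ⟪aᵢ, x̄ - p⟫ ≤ ⟪μ, r⟫ ≤ θ ‖x̄ - p‖ ‖r‖`.
The same coefficient bound shows that finitely generated cones are closed, as Farkas' lemma
requires. Equality constraints are pairs of opposite inequalities.
-/

open Finset Function Filter Topology Metric
open scoped InnerProductSpace

section ConicCaratheodory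

variable {𝕜 M ι : Type*} [Field 𝕜] [LinearOrder 𝕜] [IsStrictOrderedRing 𝕜]
  [AddCommGroup M] [Module 𝕜 M] [Fintype ι]

lemma exists_nonneg_sub_smul_eq_zero {c g : ι → 𝕜} (hc : 0 ≤ c) (hg : ∃ i, 0 < g i) :
    ∃ t : 𝕜, 0 ≤ c - t • g ∧ ∃ i, 0 < g i ∧ (c - t • g) i = 0 := by
  obtain ⟨j, hj⟩ := hg
  obtain ⟨i₀, hi₀, hmin⟩ := (univ.filter fun i => 0 < g i).exists_min_image
    (fun i => c i / g i) ⟨j, by simpa using hj⟩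
  rw [mem_filter] at hi₀
  refine ⟨c i₀ / g i₀, fun i => ?_, i₀, hi₀.2, by simp [hi₀.2.ne']⟩
  rcases lt_or_ge 0 (g i) with hgi | hgi
  · have := hmin i (by simp [hgi])
    rw [le_div_iff₀ hgi] at this
    simpa using this
  · have : c i₀ / g i₀ * g i ≤ 0 :=
      mul_nonpos_of_nonneg_of_nonpos (div_nonneg (hc _) hi₀.2.le) hgi
    simp only [Pi.sub_apply, Pi.smul_apply, smul_eq_mul, Pi.zero_apply]
    linarith [show 0 ≤ c i from hc i]

lemma exists_nonneg_support_ssubset_of_not_linearIndepOn {a : ι → M} {c : ι → 𝕜} (hc : 0 ≤ c)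
    (h : ¬ LinearIndepOn 𝕜 a (support c)) :
    ∃ c' : ι → 𝕜, 0 ≤ c' ∧ support c' ⊂ support c ∧ ∑ i, c' i • a i = ∑ i, c i • a i := by
  obtain ⟨g, hgc, hg0, hpos⟩ : ∃ g : ι → 𝕜,
      support g ⊆ support c ∧ ∑ i, g i • a i = 0 ∧ ∃ i, 0 < g i := by
    rw [linearIndepOn_iff''] at h
    push Not at h
    obtain ⟨t, g, hts, hgt, hsum, i, hit, hgi⟩ := h
    have hsupp : support g ⊆ support c := fun j hj => hts (by_contra fun hjt => hj (hgt j hjt))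
    have hsum' : ∑ i, g i • a i = 0 := by
      rw [← hsum]
      exact (sum_subset (subset_univ t) fun j _ hj => by simp [hgt j hj]).symm
    rcases hgi.lt_or_gt with hneg | hpos
    · exact ⟨-g, by simpa using hsupp, by simp [hsum'], i, by simpa using hneg⟩
    · exact ⟨g, hsupp, hsum', i, hpos⟩
  obtain ⟨t, hnonneg, i₀, hgi₀, hzero⟩ := exists_nonneg_sub_smul_eq_zero hc hpos
  refine ⟨c - t • g, hnonneg, ?_, ?_⟩
  · have hsub : support (c - t • g) ⊆ support c := fun i hi hci => hi <| by
      have : g i = 0 := by_contra fun hgi => hgc hgi hci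
      simp [hci, this]
    exact (Set.ssubset_iff_of_subset hsub).2 ⟨i₀, hgc hgi₀.ne', fun h => h hzero⟩
  · simp [sub_smul, mul_smul, sum_sub_distrib, ← smul_sum, hg0]

theorem exists_nonneg_linearIndepOn_support (a : ι → M) {c : ι → 𝕜} (hc : 0 ≤ c) :
    ∃ μ : ι → 𝕜, 0 ≤ μ ∧ support μ ⊆ support c ∧ LinearIndepOn 𝕜 a (support μ) ∧
      ∑ i, μ i • a i = ∑ i, c i • a i := by
  induction hs : support c using WellFoundedLT.induction generalizing c with
  | ind s ih =>
    subst hs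
    by_cases hli : LinearIndepOn 𝕜 a (support c)
    · exact ⟨c, hc, subset_rfl, hli, rfl⟩
    · obtain ⟨c', hc', hlt, hsum⟩ := exists_nonneg_support_ssubset_of_not_linearIndepOn hc hli
      obtain ⟨μ, hμ, hsub, hμli, hμsum⟩ := ih _ hlt hc' rfl
      exact ⟨μ, hμ, hsub.trans hlt.subset, hμli, hμsum.trans hsum⟩

end ConicCaratheodory

section CoefficientBound

variable {E ι : Type*} [NormedAddCommGroup E] [NormedSpace ℝ E] [Fintype ι]

lemma Fintype.sum_subtype_of_support_subset {M : Type*} [AddCommMonoid M] {f : ι → M}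
    {J : Set ι} [Fintype J] (hf : support f ⊆ J) : ∑ j : J, f j = ∑ i, f i := by
  rw [Finset.sum_set_coe]
  exact Fintype.sum_subset fun i h => by simpa using hf h

lemma LinearIndependent.exists_norm_le_mul_norm_sum_smul {κ : Type*} [Fintype κ] {a : κ → E}
    (ha : LinearIndependent ℝ a) :
    ∃ C, ∀ μ : κ → ℝ, ‖WithLp.toLp 2 μ‖ ≤ C * ‖∑ i, μ i • a i‖ := by
  let L := Fintype.linearCombination ℝ a ∘ₗ (WithLp.linearEquiv 2 ℝ (κ → ℝ)).toLinearMap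
  have hL : LinearMap.ker L = ⊥ := LinearMap.ker_eq_bot.2 <|
    (linearIndependent_iff_injective_fintypeLinearCombination.1 ha).comp (LinearEquiv.injective _)
  obtain ⟨K, -, hK⟩ := L.exists_antilipschitzWith hL
  exact ⟨K, fun μ => by
    simpa [L, Fintype.linearCombination_apply] using hK.le_mul_norm (map_zero L) (WithLp.toLp 2 μ)⟩

theorem exists_norm_le_mul_norm_sum_smul_of_linearIndepOn (a : ι → E) :
    ∃ θ > 0, ∀ μ : ι → ℝ, LinearIndepOn ℝ a (support μ) →
      ‖WithLp.toLp 2 μ‖ ≤ θ * ‖∑ i, μ i • a i‖ := by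
  classical
  have hJ (J : Set ι) : ∃ C, LinearIndepOn ℝ a J → ∀ μ : ι → ℝ, support μ ⊆ J →
      ‖WithLp.toLp 2 μ‖ ≤ C * ‖∑ i, μ i • a i‖ := by
    by_cases hli : LinearIndepOn ℝ a J
    · obtain ⟨C, hC⟩ := LinearIndependent.exists_norm_le_mul_norm_sum_smul hli
      refine ⟨C, fun _ μ hμ => ?_⟩
      have hsq : support (fun i => ‖μ i‖ ^ 2) ⊆ J := fun i hi => hμ fun h => hi (by simp [h])
      have hsmul : support (fun i => μ i • a i) ⊆ J := fun i hi => hμ fun h => hi (by simp [h])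
      have hnorm : ‖WithLp.toLp 2 (fun j : J => μ j)‖ = ‖WithLp.toLp 2 μ‖ := by
        simp only [EuclideanSpace.norm_eq]
        rw [Fintype.sum_subtype_of_support_subset hsq]
      rw [← hnorm, ← Fintype.sum_subtype_of_support_subset hsmul]
      exact hC _
    · exact ⟨0, fun h => absurd h hli⟩
  choose C hC using hJ
  obtain ⟨B, hB⟩ := (Set.finite_range C).bddAbove
  refine ⟨max B 1, by positivity, fun μ hμ => (hC _ hμ μ subset_rfl).trans ?_⟩
  gcongr
  exact (hB ⟨_, rfl⟩).trans (le_max_left _ _)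

end CoefficientBound

section Cone

variable {E ι : Type*} [Fintype ι]

lemma PointedCone.mem_hull_image_iff [AddCommGroup E] [Module ℝ E] {a : ι → E} {I : Set ι}
    {x : E} : x ∈ hull ℝ (a '' I) ↔
      ∃ μ : ι → ℝ, 0 ≤ μ ∧ support μ ⊆ I ∧ ∑ i, μ i • a i = x := by
  rw [hull, Finsupp.mem_span_image_iff_linearCombination]
  constructor
  · rintro ⟨l, hl, rfl⟩
    refine ⟨fun i => l i, fun i => (l i).2,
      fun i hi => hl (Finsupp.mem_support_iff.2 fun h => hi (by simp [h])), ?_⟩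
    simp [Finsupp.linearCombination_apply, Finsupp.sum_fintype]
  · rintro ⟨μ, hμ, hμI, rfl⟩
    refine ⟨Finsupp.equivFunOnFinite.symm fun i => ⟨μ i, hμ i⟩, fun i hi => hμI ?_, ?_⟩
    · simpa [Subtype.ext_iff] using hi
    · simp [Finsupp.linearCombination_apply, Finsupp.sum_fintype]

variable [NormedAddCommGroup E] [NormedSpace ℝ E]

theorem exists_bounded_coeffs_of_mem_hull (a : ι → E) :
    ∃ θ > 0, ∀ (I : Set ι), ∀ x ∈ PointedCone.hull ℝ (a '' I), ∃ μ : ι → ℝ, 0 ≤ μ ∧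
      support μ ⊆ I ∧ ∑ i, μ i • a i = x ∧ ‖WithLp.toLp 2 μ‖ ≤ θ * ‖x‖ := by
  obtain ⟨θ, hθ, hbound⟩ := exists_norm_le_mul_norm_sum_smul_of_linearIndepOn a
  refine ⟨θ, hθ, fun I x hx => ?_⟩
  obtain ⟨c, hc, hcI, rfl⟩ := PointedCone.mem_hull_image_iff.1 hx
  obtain ⟨μ, hμ, hμc, hli, hsum⟩ := exists_nonneg_linearIndepOn_support a hc
  exact ⟨μ, hμ, hμc.trans hcI, hsum, hsum ▸ hbound μ hli⟩

theorem isClosed_hull_image (a : ι → E) (I : Set ι) :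
    IsClosed (PointedCone.hull ℝ (a '' I) : Set E) := by
  obtain ⟨θ, hθ, hcoeff⟩ := exists_bounded_coeffs_of_mem_hull a
  let L : EuclideanSpace ℝ ι → E := fun μ => ∑ i, μ i • a i
  have hL : Continuous L := by fun_prop
  refine isClosed_of_closure_subset fun x hx => ?_
  -- near `x`, the cone is the image of a compact set of coefficient vectors
  let Q : Set (EuclideanSpace ℝ ι) :=
    {μ | (∀ i, 0 ≤ μ i) ∧ ∀ i ∉ I, μ i = 0} ∩ closedBall 0 (θ * (‖x‖ + 1))
  have hQ : IsCompact Q := by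
    refine (isCompact_closedBall _ _).inter_left ?_
    simp only [Set.ofPred_and, Set.ofPred_forall]
    exact (isClosed_iInter fun i => isClosed_le continuous_const (by fun_prop)).inter
      (isClosed_iInter fun i => isClosed_iInter fun _ => isClosed_eq (by fun_prop) continuous_const)
  have hsub : ball x 1 ∩ PointedCone.hull ℝ (a '' I) ⊆ L '' Q := by
    rintro y ⟨hyx, hy⟩
    obtain ⟨μ, hμ, hμI, rfl, hμθ⟩ := hcoeff I y hy
    refine ⟨WithLp.toLp 2 μ, ⟨⟨hμ, fun i hi => ?_⟩, ?_⟩, rfl⟩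
    · simpa using Function.notMem_support.1 (fun h => hi (hμI h))
    · rw [mem_closedBall_zero_iff]
      exact hμθ.trans (by gcongr; exact norm_le_of_mem_closedBall (ball_subset_closedBall hyx))
  obtain ⟨μ, ⟨⟨hμ, hμI⟩, -⟩, rfl⟩ := (hQ.image hL).isClosed.closure_subset_iff.2 hsub
    (isOpen_ball.inter_closure ⟨mem_ball_self one_pos, hx⟩)
  exact PointedCone.mem_hull_image_iff.2 ⟨μ, hμ, fun i hi => by_contra fun h => hi (hμI i h), rfl⟩

end Cone

section Polyhedron

variable {E ι : Type*} [NormedAddCommGroup E] [InnerProductSpace ℝ E]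

def polyhedron (a : ι → E) (b : ι → ℝ) : Set E := {x | ∀ i, ⟪a i, x⟫_ℝ ≤ b i}

lemma isClosed_polyhedron (a : ι → E) (b : ι → ℝ) : IsClosed (polyhedron a b) := by
  simp only [polyhedron, Set.ofPred_forall]
  exact isClosed_iInter fun i => isClosed_le (by fun_prop) continuous_const

lemma convex_polyhedron (a : ι → E) (b : ι → ℝ) : Convex ℝ (polyhedron a b) := by
  simp only [polyhedron, Set.ofPred_forall]
  exact convex_iInter fun i => convex_halfSpace_le (innerₗ E (a i)).isLinear (b i)

lemma eventually_add_smul_mem_polyhedron [Finite ι] {a : ι → E} {b : ι → ℝ} {x z : E}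
    (hx : x ∈ polyhedron a b) (hz : ∀ i, ⟪a i, x⟫_ℝ = b i → ⟪a i, z⟫_ℝ ≤ 0) :
    ∀ᶠ t in 𝓝[≥] (0 : ℝ), x + t • z ∈ polyhedron a b := by
  refine eventually_all.2 fun i => ?_
  simp only [inner_add_right, inner_smul_right]
  rcases (hx i).eq_or_lt with hi | hi
  · filter_upwards [self_mem_nhdsWithin] with t (ht : 0 ≤ t)
    nlinarith [hz i hi]
  · refine nhdsWithin_le_nhds <| ((Continuous.tendsto ?_ 0).eventually (gt_mem_nhds ?_)).mono
      fun t ht => ht.le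
    · fun_prop
    · simpa using hi

theorem mem_hull_of_forall_inner_sub_le_zero [CompleteSpace E] [Fintype ι] {a : ι → E}
    {b : ι → ℝ} {x v : E} (hx : x ∈ polyhedron a b)
    (hv : ∀ y ∈ polyhedron a b, ⟪v, y - x⟫_ℝ ≤ 0) :
    v ∈ PointedCone.hull ℝ (a '' {i | ⟪a i, x⟫_ℝ = b i}) := by
  by_contra hvK
  let K : ProperCone ℝ E := ⟨_, isClosed_hull_image a {i | ⟪a i, x⟫_ℝ = b i}⟩
  obtain ⟨y, hyK, hvy⟩ := K.hyperplane_separation' hvK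
  have hfeas : ∀ᶠ t in 𝓝[≥] (0 : ℝ), x + t • -y ∈ polyhedron a b := by
    refine eventually_add_smul_mem_polyhedron hx fun i hi => ?_
    have := hyK (a i) (PointedCone.subset_hull ⟨i, hi, rfl⟩)
    rw [inner_neg_right]
    linarith
  obtain ⟨t, ht, ht0⟩ := ((hfeas.filter_mono (nhdsWithin_mono _ Set.Ioi_subset_Ici_self)).and
    self_mem_nhdsWithin).exists
  have := hv _ ht
  rw [add_sub_cancel_left, inner_smul_right, inner_neg_right] at this
  nlinarith [show (0 : ℝ) < t from ht0]

end Polyhedron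

section Hoffman

variable {E ι : Type*} [NormedAddCommGroup E] [InnerProductSpace ℝ E] [CompleteSpace E]
  [Fintype ι]

theorem exists_infDist_polyhedron_le (a : ι → E) :
    ∃ θ > 0, ∀ b : ι → ℝ, (polyhedron a b).Nonempty → ∀ x,
      infDist x (polyhedron a b) ≤ θ * ‖WithLp.toLp 2 fun i => max (⟪a i, x⟫_ℝ - b i) 0‖ := by
  obtain ⟨θ, hθ, hcoeff⟩ := exists_bounded_coeffs_of_mem_hull a
  refine ⟨θ, hθ, fun b hne x => ?_⟩
  set r := WithLp.toLp 2 fun i => max (⟪a i, x⟫_ℝ - b i) 0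
  obtain ⟨p, hp, hpx⟩ := exists_norm_eq_iInf_of_complete_convex hne
    (isClosed_polyhedron a b).isComplete (convex_polyhedron a b) x
  rw [norm_eq_iInf_iff_real_inner_le_zero (convex_polyhedron a b) hp] at hpx
  obtain ⟨μ, hμ, hμI, hμv, hμθ⟩ := hcoeff _ _ (mem_hull_of_forall_inner_sub_le_zero hp hpx)
  have hterm (i : ι) : μ i * ⟪a i, x - p⟫_ℝ ≤ μ i * r i := by
    by_cases hi : μ i = 0
    · simp [hi]
    · have hact : ⟪a i, p⟫_ℝ = b i := hμI hi
      rw [inner_sub_right, hact]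
      exact mul_le_mul_of_nonneg_left (le_max_left _ _) (hμ i)
  have key : ‖x - p‖ * ‖x - p‖ ≤ ‖x - p‖ * (θ * ‖r‖) := calc
    ‖x - p‖ * ‖x - p‖ = ∑ i, μ i * ⟪a i, x - p⟫_ℝ := by
      rw [← real_inner_self_eq_norm_mul_norm]
      nth_rw 1 [← hμv]
      simp [sum_inner, real_inner_smul_left]
    _ ≤ ∑ i, μ i * r i := sum_le_sum fun i _ => hterm i
    _ = ⟪WithLp.toLp 2 μ, r⟫_ℝ := by simp [PiLp.inner_apply, mul_comm]
    _ ≤ ‖WithLp.toLp 2 μ‖ * ‖r‖ := real_inner_le_norm _ _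
    _ ≤ θ * ‖x - p‖ * ‖r‖ := by gcongr
    _ = ‖x - p‖ * (θ * ‖r‖) := by ring
  calc infDist x (polyhedron a b) ≤ ‖x - p‖ := dist_eq_norm x p ▸ infDist_le_dist_of_mem hp
    _ ≤ θ * ‖r‖ := by
      rcases (norm_nonneg (x - p)).eq_or_lt with h | h
      · rw [← h]; positivity
      · exact le_of_mul_le_mul_left key h

end Hoffman

lemma max_zero_sq_add_max_neg_zero_sq (u : ℝ) : max u 0 ^ 2 + max (-u) 0 ^ 2 = u ^ 2 := by
  rcases le_total u 0 with h | h
  · rw [max_eq_right h, max_eq_left (neg_nonneg.2 h)]; ring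
  · rw [max_eq_left h, max_eq_right (neg_nonpos.2 h)]; ring

section HoffmanEq

variable {E ι κ : Type*} [NormedAddCommGroup E] [InnerProductSpace ℝ E] [CompleteSpace E]
  [Fintype ι] [Fintype κ]

theorem exists_infDist_sq_le_of_inner_le_of_inner_eq (a : ι → E) (c : κ → E) :
    ∃ θ > 0, ∀ (b : ι → ℝ) (d : κ → ℝ),
      {x | (∀ i, ⟪a i, x⟫_ℝ ≤ b i) ∧ ∀ j, ⟪c j, x⟫_ℝ = d j}.Nonempty → ∀ x,
        infDist x {x | (∀ i, ⟪a i, x⟫_ℝ ≤ b i) ∧ ∀ j, ⟪c j, x⟫_ℝ = d j} ^ 2 ≤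
          θ ^ 2 * (∑ i, max (⟪a i, x⟫_ℝ - b i) 0 ^ 2 + ∑ j, (⟪c j, x⟫_ℝ - d j) ^ 2) := by
  obtain ⟨θ, hθ, hoff⟩ := exists_infDist_polyhedron_le (Sum.elim a (Sum.elim c (-c)))
  refine ⟨θ, hθ, fun b d hne x => ?_⟩
  have hS : {x | (∀ i, ⟪a i, x⟫_ℝ ≤ b i) ∧ ∀ j, ⟪c j, x⟫_ℝ = d j} =
      polyhedron (Sum.elim a (Sum.elim c (-c))) (Sum.elim b (Sum.elim d (-d))) := by
    ext y
    simp [polyhedron, Sum.forall, le_antisymm_iff, inner_neg_left, forall_and]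
  have hres : ‖WithLp.toLp 2 fun s => max (⟪Sum.elim a (Sum.elim c (-c)) s, x⟫_ℝ -
      Sum.elim b (Sum.elim d (-d)) s) 0‖ ^ 2 =
      ∑ i, max (⟪a i, x⟫_ℝ - b i) 0 ^ 2 + ∑ j, (⟪c j, x⟫_ℝ - d j) ^ 2 := by
    simp only [EuclideanSpace.norm_sq_eq, Fintype.sum_sum_type, Sum.elim_inl, Sum.elim_inr,
      Real.norm_eq_abs, sq_abs, Pi.neg_apply, inner_neg_left, neg_sub_neg, ← sum_add_distrib]
    congr 1
    exact sum_congr rfl fun j _ => by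
      rw [← max_zero_sq_add_max_neg_zero_sq (⟪c j, x⟫_ℝ - d j), neg_sub]
  rw [hS] at hne ⊢
  calc _ ≤ (θ * _) ^ 2 := pow_le_pow_left₀ infDist_nonneg (hoff _ hne x) 2
    _ = _ := by rw [mul_pow, hres]

end HoffmanEq

lemma Matrix.inner_toLp_row_eq_mulVec {m n : Type*} [Fintype n] (A : Matrix m n ℝ) (i : m)
    (x : EuclideanSpace ℝ n) : ⟪WithLp.toLp 2 (A i), x⟫_ℝ = A.mulVec x i := by
  simp [PiLp.inner_apply, Matrix.mulVec, dotProduct, mul_comm]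

/-- Hoffman error bound for the polyhedron `S = {x : Ax ≤ b, Cx = d}`:
`dist(x̄, S)² ≤ θ²(‖(Ax̄ - b)₊‖² + ‖Cx̄ - d‖²)` with `θ` depending only on `A` and `C`. -/
theorem stmt9 {m n k : ℕ} (A : Matrix (Fin m) (Fin n) ℝ) (C : Matrix (Fin k) (Fin n) ℝ) :
    ∃ θ : ℝ, 0 < θ ∧
      ∀ (b : Fin m → ℝ) (d : Fin k → ℝ)
        (S : Set (EuclideanSpace ℝ (Fin n))),
        S = {x : EuclideanSpace ℝ (Fin n) | (∀ i, A.mulVec x i ≤ b i) ∧ (∀ j, C.mulVec x j = d j)} →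
        S.Nonempty →
        ∀ xbar : EuclideanSpace ℝ (Fin n),
          (Metric.infDist xbar S) ^ 2 ≤
            θ ^ 2 * ((∑ i, max (A.mulVec xbar i - b i) 0 ^ 2)
              + ∑ j, (C.mulVec xbar j - d j) ^ 2) := by
  obtain ⟨θ, hθ, hoff⟩ := exists_infDist_sq_le_of_inner_le_of_inner_eq
    (fun i => WithLp.toLp 2 (A i)) (fun j => WithLp.toLp 2 (C j))
  simp only [Matrix.inner_toLp_row_eq_mulVec] at hoff
  refine ⟨θ, hθ, fun b d S hS hne x => ?_⟩
  subst hS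
  exact hoff b d hne x
end

section
/- Let P = ∏ᵢ[ℓᵢ, uᵢ] be a bounded box, f differentiable on ℝⁿ, K(x, z; y) = f(x) + ⟨y, Ax-b⟩ + (Γ/2)‖Ax-b‖² + (p/2)‖x-z‖². Suppose x, y, z satisfy y = y + α(Ax - b), x = [x - c∇ₓK(x, z; y)]₊ (projection onto P), and z = z + β(x - z) with α, c, β > 0. Then Ax = b, x = z, and x together with the multiplier y satisfies the KKT conditions for minimizing f over {x ∈ P : Ax = b}; in particular x is a stationary point. -/
/-!
Since `α, β ≠ 0`, the multiplier and proximal updates are stationary only when `Ax = b` and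
`x = z`; then the penalty and proximal terms contribute nothing to `∇ₓK`, which reduces to
`∇f(x) + Aᵀy`. A coordinate left fixed by the clipped step `x - c∇ₓK` sits at its lower bound
where that gradient coordinate is positive and at its upper bound where it is negative, so the
positive and negative parts of `∇ₓK` serve as the multipliers of the box constraints.
-/

open scoped RealInnerProductSpace

theorem eq_zero_of_eq_add_smul {𝕜 V : Type*} [Field 𝕜] [AddCommGroup V] [Module 𝕜 V]
    {a : 𝕜} {v w : V} (ha : a ≠ 0) (h : v = v + a • w) : w = 0 :=
  (smul_eq_zero.mp (left_eq_add.mp h)).resolve_left ha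

section AugmentedLagrangian

variable {E F : Type*} [NormedAddCommGroup E] [InnerProductSpace ℝ E] [CompleteSpace E]
  [NormedAddCommGroup F] [InnerProductSpace ℝ F] [CompleteSpace F]

theorem HasGradientAt.augmentedLagrangian {f : E → ℝ} {g x : E} (hf : HasGradientAt f g x)
    (A : E →L[ℝ] F) (b y : F) (Γ p : ℝ) (z : E) :
    HasGradientAt (fun w => f w + ⟪y, A w - b⟫ + Γ / 2 * ‖A w - b‖ ^ 2 + p / 2 * ‖w - z‖ ^ 2)
      (g + A.adjoint y + Γ • A.adjoint (A x - b) + p • (x - z)) x := by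
  have hres : HasFDerivAt (fun w => A w - b) A x := A.hasFDerivAt.sub_const b
  have hshift : HasFDerivAt (fun w : E => w - z) (ContinuousLinearMap.id ℝ E) x :=
    (hasFDerivAt_id x).sub_const z
  rw [hasGradientAt_iff_hasFDerivAt] at hf ⊢
  refine ((((hf.add ((innerSL ℝ y).hasFDerivAt.comp x hres)).add
    (hres.norm_sq.const_mul (Γ / 2))).add (hshift.norm_sq.const_mul (p / 2)))).congr_fderiv ?_
  ext w
  simp only [add_apply, smul_apply, sub_apply, ContinuousLinearMap.comp_apply,
    ContinuousLinearMap.id_apply, InnerProductSpace.toDual_apply_apply, coe_innerSL_apply,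
    map_add, map_smul, map_sub, ContinuousLinearMap.adjoint_inner_left,
    nsmul_eq_mul, Nat.cast_ofNat, smul_eq_mul]
  ring

end AugmentedLagrangian

section BoxProjection

variable {ℓ u t c g : ℝ}

theorem mem_Icc_of_eq_max_min {s : ℝ} (hlu : ℓ ≤ u) (h : t = max ℓ (min u s)) :
    t ∈ Set.Icc ℓ u :=
  ⟨h ▸ le_max_left _ _, h ▸ max_le hlu (min_le_left _ _)⟩

theorem eq_left_of_eq_max_min_sub (hc : 0 < c) (hg : 0 < g)
    (h : t = max ℓ (min u (t - c * g))) : t = ℓ := by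
  rcases max_cases ℓ (min u (t - c * g)) with ⟨hmax, _⟩ | ⟨hmax, _⟩
  · rwa [hmax] at h
  · rw [hmax] at h
    linarith [min_le_right u (t - c * g), mul_pos hc hg]

theorem eq_right_of_eq_max_min_sub (hlu : ℓ ≤ u) (hc : 0 < c) (hg : g < 0)
    (h : t = max ℓ (min u (t - c * g))) : t = u := by
  rcases min_cases u (t - c * g) with ⟨hmin, _⟩ | ⟨hmin, _⟩
  · rwa [hmin, max_eq_right hlu] at h
  · rw [hmin] at h
    linarith [le_max_right ℓ (t - c * g), mul_neg_of_pos_of_neg hc hg]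

theorem posPart_mul_sub_eq_zero_of_eq_max_min (hc : 0 < c)
    (h : t = max ℓ (min u (t - c * g))) : g⁺ * (t - ℓ) = 0 := by
  rcases le_or_gt g 0 with hg | hg
  · rw [posPart_eq_zero.mpr hg, zero_mul]
  · rw [eq_left_of_eq_max_min_sub hc hg h, sub_self, mul_zero]

theorem negPart_mul_sub_eq_zero_of_eq_max_min (hlu : ℓ ≤ u) (hc : 0 < c)
    (h : t = max ℓ (min u (t - c * g))) : g⁻ * (u - t) = 0 := by
  rcases le_or_gt 0 g with hg | hg
  · rw [negPart_eq_zero.mpr hg, zero_mul]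
  · rw [eq_right_of_eq_max_min_sub hlu hc hg h, sub_self, mul_zero]

end BoxProjection

theorem stmt12_general {n m : ℕ} (f : EuclideanSpace ℝ (Fin n) → ℝ)
    (A : EuclideanSpace ℝ (Fin n) →L[ℝ] EuclideanSpace ℝ (Fin m))
    (b : EuclideanSpace ℝ (Fin m)) (ℓ u : Fin n → ℝ)
    (α β c Γ p : ℝ)
    (K : EuclideanSpace ℝ (Fin n) → ℝ)
    (x z : EuclideanSpace ℝ (Fin n)) (y : EuclideanSpace ℝ (Fin m))
    (gK gf : EuclideanSpace ℝ (Fin n))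
    (hlu : ∀ i, ℓ i < u i)
    (hα : 0 < α) (hβ : 0 < β) (hc : 0 < c)
    (hK : ∀ w, K w = f w + (inner ℝ y (A w - b) : ℝ)
      + Γ / 2 * ‖A w - b‖ ^ 2 + p / 2 * ‖w - z‖ ^ 2)
    (hgK : HasGradientAt K gK x)
    (hgf : HasGradientAt f gf x)
    (hyfix : y = y + α • (A x - b))
    (hxfix : ∀ i, x i = max (ℓ i) (min (u i) ((x - c • gK) i)))
    (hzfix : z = z + β • (x - z)) :
    A x = b ∧ x = z ∧ (∀ i, x i ∈ Set.Icc (ℓ i) (u i)) ∧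
      ∃ μ ν : EuclideanSpace ℝ (Fin n),
        (∀ i, 0 ≤ μ i) ∧ (∀ i, 0 ≤ ν i) ∧
        gf + (ContinuousLinearMap.adjoint A) y - μ + ν = 0 ∧
        (∀ i, μ i * (x i - ℓ i) = 0) ∧
        (∀ i, ν i * (u i - x i) = 0) := by
  have hAx : A x - b = 0 := eq_zero_of_eq_add_smul hα.ne' hyfix
  have hxz : x - z = 0 := eq_zero_of_eq_add_smul hβ.ne' hzfix
  have hgK_eq : gK = gf + A.adjoint y := by
    have hL := hgf.augmentedLagrangian A b y Γ p z
    rw [hAx, hxz, map_zero, smul_zero, smul_zero, add_zero, add_zero] at hL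
    rw [funext hK] at hgK
    exact hgK.unique hL
  have hfix (i : Fin n) : x i = max (ℓ i) (min (u i) (x i - c * gK i)) := by
    simpa only [PiLp.sub_apply, PiLp.smul_apply, smul_eq_mul] using hxfix i
  refine ⟨sub_eq_zero.mp hAx, sub_eq_zero.mp hxz, fun i => mem_Icc_of_eq_max_min (hlu i).le (hfix i),
    WithLp.toLp 2 fun i => (gK i)⁺, WithLp.toLp 2 fun i => (gK i)⁻,
    fun i => posPart_nonneg _, fun i => negPart_nonneg _, ?_,
    fun i => posPart_mul_sub_eq_zero_of_eq_max_min hc (hfix i),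
    fun i => negPart_mul_sub_eq_zero_of_eq_max_min (hlu i).le hc (hfix i)⟩
  rw [← hgK_eq]
  ext i
  simp only [PiLp.add_apply, PiLp.sub_apply, PiLp.zero_apply]
  rw [sub_add, posPart_sub_negPart, sub_self]

/-- Fixed points of the proximal inexact augmented Lagrangian iteration are KKT points:
if `y = y + α(Ax - b)`, `x = [x - c∇ₓK(x, z; y)]₊` and `z = z + β(x - z)`, then `Ax = b`,
`x = z`, and `x`, `y` satisfy the KKT conditions of `min f over {x ∈ P : Ax = b}`. -/
theorem stmt12 {n m : ℕ} (f : EuclideanSpace ℝ (Fin n) → ℝ)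
    (A : EuclideanSpace ℝ (Fin n) →L[ℝ] EuclideanSpace ℝ (Fin m))
    (b : EuclideanSpace ℝ (Fin m)) (ℓ u : Fin n → ℝ)
    (α β c Γ p : ℝ)
    (K : EuclideanSpace ℝ (Fin n) → ℝ)
    (x z : EuclideanSpace ℝ (Fin n)) (y : EuclideanSpace ℝ (Fin m))
    (gK gf : EuclideanSpace ℝ (Fin n))
    (hlu : ∀ i, ℓ i < u i)
    (hα : 0 < α) (hβ : 0 < β) (hc : 0 < c) (hΓ : 0 < Γ) (hp : 0 < p)
    (hf : Differentiable ℝ f)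
    (hK : ∀ w, K w = f w + (inner ℝ y (A w - b) : ℝ)
      + Γ / 2 * ‖A w - b‖ ^ 2 + p / 2 * ‖w - z‖ ^ 2)
    (hgK : HasGradientAt K gK x)
    (hgf : HasGradientAt f gf x)
    (hyfix : y = y + α • (A x - b))
    (hxfix : ∀ i, x i = max (ℓ i) (min (u i) ((x - c • gK) i)))
    (hzfix : z = z + β • (x - z)) :
    A x = b ∧ x = z ∧ (∀ i, x i ∈ Set.Icc (ℓ i) (u i)) ∧
      ∃ μ ν : EuclideanSpace ℝ (Fin n),
        (∀ i, 0 ≤ μ i) ∧ (∀ i, 0 ≤ ν i) ∧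
        gf + (ContinuousLinearMap.adjoint A) y - μ + ν = 0 ∧
        (∀ i, μ i * (x i - ℓ i) = 0) ∧
        (∀ i, ν i * (u i - x i) = 0) :=
  stmt12_general f A b ℓ u α β c Γ p K x z y gK gf hlu hα hβ hc hK hgK hgf hyfix hxfix hzfix
end

section
/- Suppose 0 lies in the relative interior of AP - b = {Ax - b : x ∈ P} for a compact box P. Let K(x, z; y) be the proximal augmented Lagrangian (strongly convex in x) with minimizer x(y, z) over P. If {yⁱ} ⊆ ỹ⁰ + range(A) for a fixed ỹ⁰ and {zⁱ} ⊆ P are sequences such that ‖A x(yⁱ, zⁱ) - b‖ → 0, then the sequence {yⁱ} is bounded. -/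
/-!
Write `K(x, z; y) = K(x, z; 0) + ⟪y, Ax - b⟫`; the first summand is continuous, hence bounded
by some `M` on the compact `P × P`, so minimality of `xⁱ = x(yⁱ, zⁱ)` gives
`⟪yⁱ, rⁱ⟫ ≤ ⟪yⁱ, s⟫ + 2M` for all `s ∈ S = AP - b`, where `rⁱ = A xⁱ - b`.
The box has nonempty interior, so `range A` lies in `V = vectorSpan S`, and `yⁱ = qⁱ + c` with
`qⁱ ∈ V` and a fixed `c ⊥ V`. Since `0 ∈ relint S`, `S` contains a `δ`-ball of `V`; testing with
`s = -δ qⁱ / ‖qⁱ‖` yields `(δ - ‖rⁱ‖) ‖qⁱ‖ ≤ 2M`, which bounds `qⁱ` as soon as `‖rⁱ‖ ≤ δ / 2`.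
-/

open Set Filter Topology
open scoped RealInnerProductSpace

namespace EuclideanSpace

variable {ι : Type*} {ℓ u : ι → ℝ}

theorem isCompact_box : IsCompact {x : EuclideanSpace ℝ ι | ∀ i, x i ∈ Icc (ℓ i) (u i)} := by
  have hbox : {x : EuclideanSpace ℝ ι | ∀ i, x i ∈ Icc (ℓ i) (u i)} =
      EuclideanSpace.equiv ι ℝ ⁻¹' univ.pi fun i => Icc (ℓ i) (u i) := by
    ext x
    simp only [mem_preimage, mem_univ_pi]
    rfl
  rw [hbox]
  exact (EuclideanSpace.equiv ι ℝ).toHomeomorph.isCompact_preimage.2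
    (isCompact_univ_pi fun i => isCompact_Icc)

theorem affineSpan_box_eq_top [Fintype ι] (h : ∀ i, ℓ i < u i) :
    affineSpan ℝ {x : EuclideanSpace ℝ ι | ∀ i, x i ∈ Icc (ℓ i) (u i)} = ⊤ := by
  have hopen : IsOpen {x : EuclideanSpace ℝ ι | ∀ i, x i ∈ Ioo (ℓ i) (u i)} := by
    simp only [ofPred_forall]
    exact isOpen_iInter_of_finite fun i => isOpen_Ioo.preimage (by fun_prop)
  have hcenter : WithLp.toLp 2 (fun i => (ℓ i + u i) / 2) ∈
      {x : EuclideanSpace ℝ ι | ∀ i, x i ∈ Ioo (ℓ i) (u i)} := fun i => by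
    show ℓ i < (ℓ i + u i) / 2 ∧ (ℓ i + u i) / 2 < u i
    constructor <;> linarith [h i]
  exact top_unique <| (hopen.affineSpan_eq_top ⟨_, hcenter⟩).ge.trans
    (affineSpan_mono ℝ fun x hx i => Ioo_subset_Icc_self (hx i))

end EuclideanSpace

theorem LinearMap.mem_vectorSpan_image_sub {E F : Type*} [AddCommGroup E] [Module ℝ E]
    [AddCommGroup F] [Module ℝ F] (A : E →ₗ[ℝ] F) (b : F) {P : Set E}
    (hP : vectorSpan ℝ P = ⊤) (w : E) :
    A w ∈ vectorSpan ℝ ((fun x => A x - b) '' P) := by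
  let g : E →ᵃ[ℝ] F := ⟨fun x => A x - b, A, fun p v => by simp only [vadd_eq_add, map_add]; abel⟩
  change A w ∈ vectorSpan ℝ (g '' P)
  rw [← g.map_vectorSpan, hP]
  exact Submodule.mem_map_of_mem (p := ⊤) trivial

theorem exists_add_mem_of_mem_intrinsicInterior {E : Type*} [NormedAddCommGroup E]
    [NormedSpace ℝ E] {s : Set E} {x : E} (hx : x ∈ intrinsicInterior ℝ s) :
    ∃ δ > 0, ∀ v ∈ vectorSpan ℝ s, ‖v‖ ≤ δ → v + x ∈ s := by
  obtain ⟨y, hy, rfl⟩ := mem_intrinsicInterior.1 hx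
  obtain ⟨ε, hε, hball⟩ := Metric.mem_nhds_iff.1 (mem_interior_iff_mem_nhds.1 hy)
  refine ⟨ε / 2, by positivity, fun v hv hvδ => ?_⟩
  have hmem : v +ᵥ (y : E) ∈ affineSpan ℝ s :=
    AffineSubspace.vadd_mem_of_mem_direction (by rwa [direction_affineSpan]) y.2
  have hvy : (⟨v +ᵥ (y : E), hmem⟩ : affineSpan ℝ s) ∈ Metric.ball y ε := by
    rw [Metric.mem_ball, Subtype.dist_eq, dist_eq_norm]
    simp only [vadd_eq_add, add_sub_cancel_right]
    linarith
  exact hball hvy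

theorem subset_vectorSpan_of_zero_mem {E : Type*} [AddCommGroup E] [Module ℝ E] {s : Set E}
    (h0 : (0 : E) ∈ s) : s ⊆ vectorSpan ℝ s := fun x hx => by
  simpa using vsub_mem_vectorSpan ℝ hx h0

theorem IsMinOn.le_add_of_abs_le {α : Type*} {φ ψ : α → ℝ} {s : Set α} {x₀ : α} {M : ℝ}
    (hmin : IsMinOn (fun x => φ x + ψ x) s x₀) (hx₀ : x₀ ∈ s) (hφ : ∀ x ∈ s, |φ x| ≤ M) :
    ∀ x ∈ s, ψ x₀ ≤ ψ x + 2 * M := fun x hx => by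
  have hle : φ x₀ + ψ x₀ ≤ φ x + ψ x := hmin hx
  linarith [abs_le.1 (hφ x hx), abs_le.1 (hφ x₀ hx₀)]

section InnerProductSpace

variable {F : Type*} [NormedAddCommGroup F] [InnerProductSpace ℝ F] {V : Submodule ℝ F}
  {S : Set F} {δ C : ℝ}

theorem mul_norm_le_of_forall_inner_le {q r : F} (hδ : 0 ≤ δ)
    (hball : ∀ v ∈ V, ‖v‖ ≤ δ → v ∈ S) (hq : q ∈ V) (h : ∀ s ∈ S, ⟪q, r⟫ ≤ ⟪q, s⟫ + C) :
    (δ - ‖r‖) * ‖q‖ ≤ C := by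
  rcases eq_or_ne q 0 with rfl | hq0
  · simpa using h 0 (hball 0 V.zero_mem (by simpa using hδ))
  have hqn : 0 < ‖q‖ := norm_pos_iff.2 hq0
  set v := -(δ / ‖q‖) • q
  have hv : ‖v‖ = δ := by
    rw [norm_smul, norm_neg, Real.norm_eq_abs, abs_of_nonneg (by positivity)]
    field_simp
  have hqv : ⟪q, v⟫ = -(δ * ‖q‖) := by
    rw [real_inner_smul_right, real_inner_self_eq_norm_sq]
    field_simp
  have hvS := h v (hball v (V.smul_mem _ hq) hv.le)
  have hqr : -(‖q‖ * ‖r‖) ≤ ⟪q, r⟫ := neg_le_of_abs_le (abs_real_inner_le_norm q r)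
  linarith

theorem exists_norm_le_of_forall_inner_le [V.HasOrthogonalProjection] {y₀ : F} {y r : ℕ → F}
    (hδ : 0 < δ) (hSV : S ⊆ V) (hball : ∀ v ∈ V, ‖v‖ ≤ δ → v ∈ S) (hy : ∀ i, y i - y₀ ∈ V)
    (hrS : ∀ i, r i ∈ S) (hr : Tendsto (fun i => ‖r i‖) atTop (𝓝 0))
    (h : ∀ i, ∀ s ∈ S, ⟪y i, r i⟫ ≤ ⟪y i, s⟫ + C) :
    ∃ R, ∀ i, ‖y i‖ ≤ R := by
  obtain ⟨a, ha, c, hc, rfl⟩ := V.exists_add_mem_mem_orthogonal y₀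
  have hinner : ∀ i, ∀ s ∈ V, ⟪y i, s⟫ = ⟪y i - c, s⟫ := fun i s hs => by
    rw [inner_sub_left, (V.mem_orthogonal' c).1 hc s hs, sub_zero]
  have hq : ∀ i, y i - c ∈ V := fun i => by
    convert V.add_mem (hy i) ha using 1
    abel
  have hbound : ∀ i, (δ - ‖r i‖) * ‖y i - c‖ ≤ C := fun i =>
    mul_norm_le_of_forall_inner_le hδ.le hball (hq i) fun s hs => by
      rw [← hinner i _ (hSV (hrS i)), ← hinner i _ (hSV hs)]
      exact h i s hs
  have hsmall : ∀ᶠ i in atTop, ‖r i‖ ≤ δ / 2 :=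
    (hr.eventually_lt_const (half_pos hδ)).mono fun _ => le_of_lt
  have hev : ∀ᶠ i in atTop, ‖y i‖ ≤ 2 * C / δ + ‖c‖ := hsmall.mono fun i hi => by
    have hqi : ‖y i - c‖ ≤ 2 * C / δ := by
      rw [le_div_iff₀ hδ]
      nlinarith [hbound i, norm_nonneg (y i - c)]
    calc ‖y i‖ = ‖(y i - c) + c‖ := by rw [sub_add_cancel]
      _ ≤ 2 * C / δ + ‖c‖ := (norm_add_le _ _).trans (by linarith)
  obtain ⟨R, hR⟩ := (isBoundedUnder_of_eventually_le hev).bddAbove_range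
  exact ⟨R, fun i => hR ⟨i, rfl⟩⟩

end InnerProductSpace

theorem stmt13_general {n m : ℕ} (f : EuclideanSpace ℝ (Fin n) → ℝ)
    (A : EuclideanSpace ℝ (Fin n) →L[ℝ] EuclideanSpace ℝ (Fin m))
    (b : EuclideanSpace ℝ (Fin m)) (ℓ u : Fin n → ℝ)
    (P : Set (EuclideanSpace ℝ (Fin n))) (Γ p L : ℝ)
    (K : EuclideanSpace ℝ (Fin n) → EuclideanSpace ℝ (Fin n) → EuclideanSpace ℝ (Fin m) → ℝ)
    (xmin : EuclideanSpace ℝ (Fin m) → EuclideanSpace ℝ (Fin n) → EuclideanSpace ℝ (Fin n))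
    (ytilde0 : EuclideanSpace ℝ (Fin m))
    (y : ℕ → EuclideanSpace ℝ (Fin m)) (z : ℕ → EuclideanSpace ℝ (Fin n))
    (hP : P = {x | ∀ i, x i ∈ Set.Icc (ℓ i) (u i)})
    (hlu : ∀ i, ℓ i < u i)
    (hrelint : (0 : EuclideanSpace ℝ (Fin m)) ∈
      intrinsicInterior ℝ ((fun x => A x - b) '' P))
    (hf : Differentiable ℝ f)
    (hK : ∀ x z' y', K x z' y' = f x + (inner ℝ y' (A x - b) : ℝ)
      + Γ / 2 * ‖A x - b‖ ^ 2 + p / 2 * ‖x - z'‖ ^ 2)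
    (hxmin : ∀ y' z', xmin y' z' ∈ P ∧ IsMinOn (fun x => K x z' y') P (xmin y' z'))
    (hyrange : ∀ i : ℕ, ∃ w, y i = ytilde0 + A w)
    (hzP : ∀ i : ℕ, z i ∈ P)
    (hres : Filter.Tendsto (fun i => ‖A (xmin (y i) (z i)) - b‖) Filter.atTop (nhds 0)) :
    ∃ R : ℝ, ∀ i, ‖y i‖ ≤ R := by
  have hPc : IsCompact P := hP ▸ EuclideanSpace.isCompact_box
  have hPspan : vectorSpan ℝ P = ⊤ :=
    AffineSubspace.vectorSpan_eq_top_of_affineSpan_eq_top ℝ _ _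
      (hP ▸ EuclideanSpace.affineSpan_box_eq_top hlu)
  obtain ⟨δ, hδ, hball⟩ := exists_add_mem_of_mem_intrinsicInterior hrelint
  have hsplit : ∀ x z' y', K x z' y' = K x z' 0 + ⟪y', A x - b⟫ := fun x z' y' => by
    simp only [hK, inner_zero_left]
    ring
  obtain ⟨M, hM⟩ : ∃ M, ∀ q ∈ P ×ˢ P, ‖K q.1 q.2 0‖ ≤ M := by
    have hfc := hf.continuous
    refine (hPc.prod hPc).exists_bound_of_continuousOn (Continuous.continuousOn ?_)
    simp only [hK, inner_zero_left, add_zero]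
    fun_prop
  refine exists_norm_le_of_forall_inner_le (y₀ := ytilde0) (C := 2 * M) hδ
    (subset_vectorSpan_of_zero_mem (intrinsicInterior_subset hrelint))
    (fun v hv hvδ => by simpa using hball v hv hvδ) (fun i => ?_)
    (fun i => mem_image_of_mem _ (hxmin _ _).1) hres ?_
  · obtain ⟨w, hw⟩ := hyrange i
    rw [hw, add_sub_cancel_left]
    exact A.toLinearMap.mem_vectorSpan_image_sub b hPspan w
  · rintro i _ ⟨x, hx, rfl⟩
    have hmin : IsMinOn (fun x => K x (z i) 0 + ⟪y i, A x - b⟫) P (xmin (y i) (z i)) := by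
      simpa only [← hsplit] using (hxmin _ _).2
    exact hmin.le_add_of_abs_le (hxmin _ _).1
      (fun x' hx' => by simpa only [Real.norm_eq_abs] using hM (x', z i) ⟨hx', hzP i⟩) x hx

/-- Boundedness of the dual sequence: if `0 ∈ relint(AP - b)`, `yⁱ ∈ ỹ⁰ + range A`, and
`‖A x(yⁱ, zⁱ) - b‖ → 0`, then `{yⁱ}` is bounded. -/
theorem stmt13 {n m : ℕ} (f : EuclideanSpace ℝ (Fin n) → ℝ)
    (A : EuclideanSpace ℝ (Fin n) →L[ℝ] EuclideanSpace ℝ (Fin m))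
    (b : EuclideanSpace ℝ (Fin m)) (ℓ u : Fin n → ℝ)
    (P : Set (EuclideanSpace ℝ (Fin n))) (Γ p γ L : ℝ)
    (K : EuclideanSpace ℝ (Fin n) → EuclideanSpace ℝ (Fin n) → EuclideanSpace ℝ (Fin m) → ℝ)
    (xmin : EuclideanSpace ℝ (Fin m) → EuclideanSpace ℝ (Fin n) → EuclideanSpace ℝ (Fin n))
    (ytilde0 : EuclideanSpace ℝ (Fin m))
    (y : ℕ → EuclideanSpace ℝ (Fin m)) (z : ℕ → EuclideanSpace ℝ (Fin n))
    (hP : P = {x | ∀ i, x i ∈ Set.Icc (ℓ i) (u i)})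
    (hlu : ∀ i, ℓ i < u i)
    (hrelint : (0 : EuclideanSpace ℝ (Fin m)) ∈
      intrinsicInterior ℝ ((fun x => A x - b) '' P))
    (hf : Differentiable ℝ f)
    (hfL : ∀ x x', ‖gradient f x - gradient f x'‖ ≤ L * ‖x - x'‖)
    (hΓ : 0 < Γ) (hpγ : 0 < p + γ)
    (hK : ∀ x z' y', K x z' y' = f x + (inner ℝ y' (A x - b) : ℝ)
      + Γ / 2 * ‖A x - b‖ ^ 2 + p / 2 * ‖x - z'‖ ^ 2)
    (hsc : ∀ y' z', StrongConvexOn P (p + γ) (fun x => K x z' y'))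
    (hxmin : ∀ y' z', xmin y' z' ∈ P ∧ IsMinOn (fun x => K x z' y') P (xmin y' z'))
    (hyrange : ∀ i : ℕ, ∃ w, y i = ytilde0 + A w)
    (hzP : ∀ i : ℕ, z i ∈ P)
    (hres : Filter.Tendsto (fun i => ‖A (xmin (y i) (z i)) - b‖) Filter.atTop (nhds 0)) :
    ∃ R : ℝ, ∀ i, ‖y i‖ ≤ R :=
  stmt13_general f A b ℓ u P Γ p L K xmin ytilde0 y z hP hlu hrelint hf hK hxmin hyrange hzP hres
end
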